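/- Lemma 4, KKT version: the inexact proximal step stays feasible before an ε-KKT point is reached. Let X ⊆ ℝ^d be convex, let 0 ≤ ρ < ρ̂ with ρ̂ > 1, set μ = ρ̂ − ρ, let ε > 0 and B ≥ 0, and set τ = (ρ̂ − ρ)ε²/(4(1+B)²ρ̂(2ρ̂ − ρ)). Let f, g : ℝ^d → ℝ, let x_k ∈ X, and define F_k(x) = f(x) + (ρ̂/2)‖x − x_k‖² and G_k(x) = g(x) + (ρ̂/2)‖x − x_k‖². Suppose x̂ ∈ X, 0 ≤ λ ≤ B, ζ_F is a μ-strong subgradient of F_k at x̂ over X, ζ_G is a μ-strong subgradient of G_k at x̂ over X, ν ∈ N_X(x̂), ζ_F + λζ_G + ν = 0, and λ·G_k(x̂) = 0. If ‖x̂ − x_k‖ > ε/((1+B)ρ̂), then every x₊ ∈ X with F_k(x₊) ≤ F_k(x̂) + τ and G_k(x₊) ≤ τ satisfies g(x₊) ≤ 0. -/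

import Mathlib

/-!
Adding `λ` times the strong subgradient inequality of `G_k` to that of `F_k` and using the KKT
relation `ζ_F + λ ζ_G = -ν ∈ -N_X(x̂)` together with `λ G_k(x̂) = 0` gives the quadratic growth
`F_k(x̂) + (1 + λ) μ/2 ‖x₊ - x̂‖² ≤ F_k(x₊) + λ G_k(x₊)`, so an inexact step with
`F_k(x₊) ≤ F_k(x̂) + τ`, `G_k(x₊) ≤ τ` has `‖x₊ - x̂‖² ≤ 2τ/μ`. The value of `τ` is exactly such
that `(ε / ((1 + B) ρ̂))² = 2 (2τ/μ) + 2 (2τ/ρ̂)`, so as `x̂` is far from `x_k`, the triangle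
inequality forces `‖x₊ - x_k‖² > 2τ/ρ̂`, and then `g(x₊) = G_k(x₊) - ρ̂/2 ‖x₊ - x_k‖² < τ - τ = 0`.
-/

open RealInnerProductSpace

variable {E : Type*} [NormedAddCommGroup E] [InnerProductSpace ℝ E]

def HasStrongSubgradientWithin (μ : ℝ) (X : Set E) (h : E → ℝ) (x ζ : E) : Prop :=
  ∀ y ∈ X, h x + ⟪ζ, y - x⟫ + μ / 2 * ‖y - x‖ ^ 2 ≤ h y

def normalCone (X : Set E) (x : E) : Set E :=
  {ν | ∀ y ∈ X, ⟪ν, y - x⟫ ≤ 0}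

namespace HasStrongSubgradientWithin

variable {μ μF μG lam : ℝ} {X : Set E} {h F G : E → ℝ} {x ζ ζF ζG ν : E}

theorem add_smul (hF : HasStrongSubgradientWithin μF X F x ζF)
    (hG : HasStrongSubgradientWithin μG X G x ζG) (hlam : 0 ≤ lam) :
    HasStrongSubgradientWithin (μF + lam * μG) X (fun y ↦ F y + lam * G y) x
      (ζF + lam • ζG) := by
  intro y hy
  have hGy := mul_le_mul_of_nonneg_left (hG y hy) hlam
  simp only [inner_add_left, real_inner_smul_left]
  linarith [hF y hy]

theorem add_half_mul_sq_le_of_add_eq_zero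
    (hζ : HasStrongSubgradientWithin μ X h x ζ) (hν : ν ∈ normalCone X x)
    (hsum : ζ + ν = 0) {y : E} (hy : y ∈ X) :
    h x + μ / 2 * ‖y - x‖ ^ 2 ≤ h y := by
  have hinner : ⟪ζ, y - x⟫ = -⟪ν, y - x⟫ := by
    rw [eq_neg_of_add_eq_zero_left hsum, inner_neg_left]
  linarith [hζ y hy, hν y hy]

end HasStrongSubgradientWithin

theorem sq_div_eq_of_tau_eq {ρ ρ' ε B τ : ℝ} (hρ' : 0 < ρ') (hρρ' : ρ < ρ') (hB : 1 + B ≠ 0)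
    (hτ : τ = (ρ' - ρ) * ε ^ 2 / (4 * (1 + B) ^ 2 * ρ' * (2 * ρ' - ρ))) :
    (ε / ((1 + B) * ρ')) ^ 2 = 2 * (2 * τ / (ρ' - ρ)) + 2 * (2 * τ / ρ') := by
  have hμ : ρ' - ρ ≠ 0 := by linarith
  subst hτ
  field_simp
  rw [eq_div_iff (by linarith)]
  ring

theorem inexact_step_feasible_KKT_general {d : ℕ}
    (X : Set (EuclideanSpace ℝ (Fin d)))
    (ρ ρ' μ ε B τ : ℝ) (hρ : 0 ≤ ρ) (hρρ' : ρ < ρ')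
    (hμ : μ = ρ' - ρ) (hε : 0 < ε) (hB : 0 ≤ B)
    (hτ : τ = (ρ' - ρ) * ε ^ 2 / (4 * (1 + B) ^ 2 * ρ' * (2 * ρ' - ρ)))
    (g : EuclideanSpace ℝ (Fin d) → ℝ)
    (xk : EuclideanSpace ℝ (Fin d))
    (Fk Gk : EuclideanSpace ℝ (Fin d) → ℝ)
    (hGk : ∀ x, Gk x = g x + ρ' / 2 * ‖x - xk‖ ^ 2)
    (xh : EuclideanSpace ℝ (Fin d))
    (lam : ℝ) (hlam : 0 ≤ lam)
    (ζF ζG ν : EuclideanSpace ℝ (Fin d))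
    (hζF : ∀ y ∈ X, Fk y ≥ Fk xh + ⟪ζF, y - xh⟫ + μ / 2 * ‖y - xh‖ ^ 2)
    (hζG : ∀ y ∈ X, Gk y ≥ Gk xh + ⟪ζG, y - xh⟫ + μ / 2 * ‖y - xh‖ ^ 2)
    (hν : ∀ y ∈ X, ⟪ν, y - xh⟫ ≤ 0)
    (heq : ζF + lam • ζG + ν = 0)
    (hcomp : lam * Gk xh = 0)
    (hfar : ε / ((1 + B) * ρ') < ‖xh - xk‖)
    (xp : EuclideanSpace ℝ (Fin d)) (hxp : xp ∈ X)
    (hFxp : Fk xp ≤ Fk xh + τ) (hGxp : Gk xp ≤ τ) :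
    g xp ≤ 0 := by
  have hμpos : 0 < μ := by linarith
  have hρ'pos : 0 < ρ' := by linarith
  have hgrowth := HasStrongSubgradientWithin.add_half_mul_sq_le_of_add_eq_zero
    ((show HasStrongSubgradientWithin μ X Fk xh ζF from hζF).add_smul hζG hlam) hν heq hxp
  have hstep : ‖xp - xh‖ ^ 2 ≤ 2 * τ / μ := by
    rw [le_div_iff₀ hμpos]
    nlinarith [mul_le_mul_of_nonneg_left hGxp hlam]
  have hfar_sq : 2 * (2 * τ / μ) + 2 * (2 * τ / ρ') < ‖xh - xk‖ ^ 2 := by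
    rw [hμ, ← sq_div_eq_of_tau_eq hρ'pos hρρ' (by linarith) hτ]
    exact pow_lt_pow_left₀ hfar (by positivity) two_ne_zero
  have hmove : 2 * τ / ρ' < ‖xp - xk‖ ^ 2 := by
    have htri : ‖xh - xk‖ ≤ ‖xp - xh‖ + ‖xp - xk‖ := by
      simpa [norm_sub_rev xh xp] using norm_sub_le_norm_sub_add_norm_sub xh xp xk
    nlinarith [add_sq_le (a := ‖xp - xh‖) (b := ‖xp - xk‖), norm_nonneg (xh - xk)]
  rw [div_lt_iff₀ hρ'pos] at hmove
  linarith [hGk xp]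

/-- Lemma 4, KKT version: the inexact proximal step stays feasible
before an ε-KKT point is reached. -/
theorem inexact_step_feasible_KKT {d : ℕ}
    (X : Set (EuclideanSpace ℝ (Fin d))) (hX : Convex ℝ X)
    (ρ ρ' μ ε B τ : ℝ) (hρ : 0 ≤ ρ) (hρρ' : ρ < ρ') (hρ' : 1 < ρ')
    (hμ : μ = ρ' - ρ) (hε : 0 < ε) (hB : 0 ≤ B)
    (hτ : τ = (ρ' - ρ) * ε ^ 2 / (4 * (1 + B) ^ 2 * ρ' * (2 * ρ' - ρ)))
    (f g : EuclideanSpace ℝ (Fin d) → ℝ)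
    (xk : EuclideanSpace ℝ (Fin d)) (hxk : xk ∈ X)
    (Fk Gk : EuclideanSpace ℝ (Fin d) → ℝ)
    (hFk : ∀ x, Fk x = f x + ρ' / 2 * ‖x - xk‖ ^ 2)
    (hGk : ∀ x, Gk x = g x + ρ' / 2 * ‖x - xk‖ ^ 2)
    (xh : EuclideanSpace ℝ (Fin d)) (hxh : xh ∈ X)
    (lam : ℝ) (hlam : 0 ≤ lam) (hlamB : lam ≤ B)
    (ζF ζG ν : EuclideanSpace ℝ (Fin d))
    (hζF : ∀ y ∈ X, Fk y ≥ Fk xh + ⟪ζF, y - xh⟫ + μ / 2 * ‖y - xh‖ ^ 2)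
    (hζG : ∀ y ∈ X, Gk y ≥ Gk xh + ⟪ζG, y - xh⟫ + μ / 2 * ‖y - xh‖ ^ 2)
    (hν : ∀ y ∈ X, ⟪ν, y - xh⟫ ≤ 0)
    (heq : ζF + lam • ζG + ν = 0)
    (hcomp : lam * Gk xh = 0)
    (hfar : ε / ((1 + B) * ρ') < ‖xh - xk‖)
    (xp : EuclideanSpace ℝ (Fin d)) (hxp : xp ∈ X)
    (hFxp : Fk xp ≤ Fk xh + τ) (hGxp : Gk xp ≤ τ) :
    g xp ≤ 0 :=
  inexact_step_feasible_KKT_general X ρ ρ' μ ε B τ hρ hρρ' hμ hε hB hτ g xk Fk Gk hGk xh lam hlam ζF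
    ζG ν hζF hζG hν heq hcomp hfar xp hxp hFxp hGxp
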